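/- Every surjection in sC_Λ can be factorised as a (possibly transfinite inverse limit of a) composition of small extensions, and every acyclic surjection in sC_Λ can be factorised as a composition of acyclic small extensions. -/

import Mathlib

open CategoryTheory Simplicial Opposite

/-! ## The category `C_Λ` of local Artinian `Λ`-algebras with residue field `k`,
and the category `sC_Λ` of Artinian simplicial local `Λ`-algebras. -/

variable (Λ : Type) [CommRing Λ] [IsLocalRing Λ] [IsNoetherianRing Λ]
  [IsAdicComplete (IsLocalRing.maximalIdeal Λ) Λ]

/-- The residue field `k` of `Λ`. -/
abbrev resK := IsLocalRing.ResidueField Λ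

/-- An object of `C_Λ`: a local Artinian `Λ`-algebra whose residue field is
(canonically isomorphic to) `k`. -/
structure ArtAlg where
  carrier : Type
  [commRing : CommRing carrier]
  [algebra : Algebra Λ carrier]
  [artinian : IsArtinianRing carrier]
  [isLocal : IsLocalRing carrier]
  [localHom : IsLocalHom (algebraMap Λ carrier)]
  residue_bij : Function.Bijective
    (IsLocalRing.ResidueField.map (algebraMap Λ carrier))

attribute [instance] ArtAlg.commRing ArtAlg.algebra ArtAlg.artinian
  ArtAlg.isLocal ArtAlg.localHom

instance : Category (ArtAlg Λ) where
  Hom A B := A.carrier →ₐ[Λ] B.carrier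
  id A := AlgHom.id Λ A.carrier
  comp f g := g.comp f

/-- Interpret a morphism of `C_Λ` as an algebra homomorphism. -/
def ArtAlg.toAlg {Λ : Type} [CommRing Λ] [IsLocalRing Λ] [IsNoetherianRing Λ]
    [IsAdicComplete (IsLocalRing.maximalIdeal Λ) Λ] {A B : ArtAlg Λ}
    (f : A ⟶ B) : A.carrier →ₐ[Λ] B.carrier := f

/-- A morphism in `C_Λ` is surjective if its underlying map is. -/
def ArtAlg.Surjective {Λ : Type} [CommRing Λ] [IsLocalRing Λ] [IsNoetherianRing Λ]
    [IsAdicComplete (IsLocalRing.maximalIdeal Λ) Λ] {A B : ArtAlg Λ}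
    (f : A ⟶ B) : Prop := Function.Surjective (ArtAlg.toAlg f)

/-- The ideal `m(A)² + μ·m(A)` of `A`, by which one quotients the maximal ideal
to obtain the cotangent space `cot A = m(A)/(m(A)² + μ·m(A))`. -/
def cotDenom (R : ArtAlg Λ) : Ideal R.carrier :=
  (IsLocalRing.maximalIdeal R.carrier) ^ 2 ⊔
    ((IsLocalRing.maximalIdeal Λ).map (algebraMap Λ R.carrier) *
      IsLocalRing.maximalIdeal R.carrier)

/-- Vanishing, in degree `n`, of the normalisation `N(cot A)` of the cotangent
space of a simplicial object `X` of `C_Λ`: the normalisation in degree `n` is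
`⋂_{i>0} ker(∂ᵢ : (cot A)_n → (cot A)_{n-1})`. -/
def NormCotVanish (X : SimplicialObject (ArtAlg Λ)) : ℕ → Prop := fun n => match n with
  | 0 => ∀ x ∈ IsLocalRing.maximalIdeal (X.obj (op ⦋0⦌)).carrier,
      x ∈ cotDenom Λ (X.obj (op ⦋0⦌))
  | (n + 1) => ∀ x ∈ IsLocalRing.maximalIdeal (X.obj (op ⦋n + 1⦌)).carrier,
      (∀ i : Fin (n + 1), ArtAlg.toAlg (X.δ i.succ) x ∈ cotDenom Λ (X.obj (op ⦋n⦌))) →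
        x ∈ cotDenom Λ (X.obj (op ⦋n + 1⦌))

/-- An object of `sC_Λ`: an Artinian simplicial local `Λ`-algebra with residue
field `k`, i.e. a simplicial object of `C_Λ` whose normalised cotangent space
is concentrated in finitely many degrees and whose maximal ideal is (uniformly)
nilpotent (cf. Lemma 1.3 of the paper). -/
structure SArtAlg where
  X : SimplicialObject (ArtAlg Λ)
  nilpotent : ∃ n > 0, ∀ m : SimplexCategoryᵒᵖ,
    (IsLocalRing.maximalIdeal (X.obj m).carrier) ^ n = ⊥
  cotFinite : ∃ N : ℕ, ∀ n ≥ N, NormCotVanish Λ X n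

instance : Category (SArtAlg Λ) where
  Hom A B := A.X ⟶ B.X
  id A := 𝟙 A.X
  comp f g := f ≫ g

variable {Λ}

/-- The algebra homomorphism underlying a morphism of `sC_Λ` in simplicial degree `m`. -/
def SArtAlg.app {A B : SArtAlg Λ} (f : A ⟶ B) (m : SimplexCategoryᵒᵖ) :
    (A.X.obj m).carrier →ₐ[Λ] (B.X.obj m).carrier :=
  ArtAlg.toAlg (NatTrans.app f m)

/-- A morphism of `sC_Λ` is surjective if it is levelwise surjective. -/
def SArtAlg.Surj {A B : SArtAlg Λ} (f : A ⟶ B) : Prop :=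
  ∀ m, Function.Surjective (SArtAlg.app f m)

/-- Cycles for the Moore complex of a simplicial algebra:
`Z_i = {x ∈ A_i | ∂_j x = 0 for all j}` (in degrees `i > 0`), `Z_0 = A_0`. -/
def SArtAlg.isCycle (A : SArtAlg Λ) : ∀ i : ℕ, (A.X.obj (op ⦋i⦌)).carrier → Prop :=
  fun i x => match i, x with
  | 0, _ => True
  | (i + 1), x => ∀ j : Fin (i + 2), ArtAlg.toAlg (A.X.δ j) x = 0

/-- The boundary relation for the Moore complex: `x ~ y` iff `x - y = ∂₀ h` for
some `h` killed by all the other face maps. -/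
def SArtAlg.mooreRel (A : SArtAlg Λ) (i : ℕ)
    (x y : {z : (A.X.obj (op ⦋i⦌)).carrier // A.isCycle i z}) : Prop :=
  ∃ h : (A.X.obj (op ⦋i + 1⦌)).carrier,
    (∀ j : Fin (i + 1), ArtAlg.toAlg (A.X.δ j.succ) h = 0) ∧
      ArtAlg.toAlg (A.X.δ (0 : Fin (i + 2))) h = x.1 - y.1

/-- The homotopy group `π_i(A)` of a simplicial algebra, computed via the Moore complex. -/
def SArtAlg.pi (A : SArtAlg Λ) (i : ℕ) : Type := Quot (A.mooreRel i)

lemma SArtAlg.app_naturality {A B : SArtAlg Λ} (f : A ⟶ B) {m m' : SimplexCategoryᵒᵖ}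
    (g : m ⟶ m') (x : (A.X.obj m).carrier) :
    SArtAlg.app f m' (ArtAlg.toAlg (A.X.map g) x) =
      ArtAlg.toAlg (B.X.map g) (SArtAlg.app f m x) := by
  have h := NatTrans.naturality (self := f) g
  show ArtAlg.toAlg (A.X.map g ≫ NatTrans.app f m') x =
    ArtAlg.toAlg (NatTrans.app f m ≫ B.X.map g) x
  rw [h]

/-- The map induced by a morphism of `sC_Λ` on homotopy groups. -/
def SArtAlg.piMap {A B : SArtAlg Λ} (f : A ⟶ B) (i : ℕ) :
    A.pi i → B.pi i := by
  refine Quot.map (fun x => ⟨SArtAlg.app f (op ⦋i⦌) x.1, ?_⟩) ?_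
  · cases i with
    | zero => trivial
    | succ i =>
      intro j
      have h1 := SArtAlg.app_naturality f (g := (SimplexCategory.δ j).op) x.1
      have h2 : ArtAlg.toAlg (A.X.map (SimplexCategory.δ j).op) x.1 = 0 := x.2 j
      show ArtAlg.toAlg (B.X.map (SimplexCategory.δ j).op)
        (SArtAlg.app f (op ⦋i + 1⦌) x.1) = 0
      rw [← h1, h2, map_zero]
  · rintro x y ⟨h, hker, h0⟩
    refine ⟨SArtAlg.app f (op ⦋i + 1⦌) h, fun j => ?_, ?_⟩
    · have h1 := SArtAlg.app_naturality f (g := (SimplexCategory.δ j.succ).op) h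
      have h2 : ArtAlg.toAlg (A.X.map (SimplexCategory.δ j.succ).op) h = 0 := hker j
      show ArtAlg.toAlg (B.X.map (SimplexCategory.δ j.succ).op)
        (SArtAlg.app f (op ⦋i + 1⦌) h) = 0
      rw [← h1, h2, map_zero]
    · have h1 := SArtAlg.app_naturality f
        (g := (SimplexCategory.δ (0 : Fin (i + 2))).op) h
      have h2 : ArtAlg.toAlg (A.X.map (SimplexCategory.δ (0 : Fin (i + 2))).op) h
        = x.1 - y.1 := h0
      show ArtAlg.toAlg (B.X.map (SimplexCategory.δ (0 : Fin (i + 2))).op)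
        (SArtAlg.app f (op ⦋i + 1⦌) h) = _
      rw [← h1, h2, map_sub]

/-- A morphism of `sC_Λ` is acyclic if it induces isomorphisms on all homotopy groups. -/
def SArtAlg.Acyclic {A B : SArtAlg Λ} (f : A ⟶ B) : Prop :=
  ∀ i, Function.Bijective (SArtAlg.piMap f i)

/-- A small extension in `sC_Λ`: a surjection whose kernel `I` satisfies `m(A)·I = 0`. -/
def SArtAlg.SmallExt {A B : SArtAlg Λ} (f : A ⟶ B) : Prop :=
  SArtAlg.Surj f ∧ ∀ m, (IsLocalRing.maximalIdeal (A.X.obj m).carrier) *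
    RingHom.ker (SArtAlg.app f m).toRingHom = ⊥

/-- An acyclic small extension. -/
def SArtAlg.AcySmallExt {A B : SArtAlg Λ} (f : A ⟶ B) : Prop :=
  SArtAlg.SmallExt f ∧ SArtAlg.Acyclic f

/-! ## Statement 1: factorisation of surjections into small extensions -/

section Statement1


/-- The data of a factorisation of `f : A ⟶ B` as the (possibly infinite,
i.e. inverse limit of a) composition of a tower `⋯ ⟶ C 2 ⟶ C 1 ⟶ C 0 ≅ B`
of morphisms in `sC_Λ`:  `A` maps compatibly onto the tower, and is recovered
as the inverse limit of the tower (levelwise in each simplicial degree). -/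
structure TowerFactorisation {A B : SArtAlg Λ} (f : A ⟶ B) where
  C : ℕ → SArtAlg Λ
  g : ∀ j : ℕ, C (j + 1) ⟶ C j
  p : ∀ j : ℕ, A ⟶ C j
  e : C 0 ≅ B
  compat : ∀ j, p (j + 1) ≫ g j = p j
  factors : p 0 ≫ e.hom = f
  isLimit : ∀ m : SimplexCategoryᵒᵖ,
    Function.Bijective
      (fun a : ((A.X.obj m).carrier) =>
        (⟨fun j => SArtAlg.app (p j) m a,
          fun j => (congrArg (fun h => SArtAlg.app h m a) (compat j)).symm ▸ rfl⟩ :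
          {s : ∀ j, ((C j).X.obj m).carrier //
            ∀ j, SArtAlg.app (g j) m (s (j + 1)) = s j}))

/-!
Write `K = ker f`. For the first factorisation take the tower `A/m^j K`: each step is a small
extension, and since the maximal ideals of `A` are uniformly nilpotent the tower is eventually
constant in each degree, with limit `A`.

For the second, call a simplicial ideal Moore-acyclic if every cycle of `A` lying in it bounds a
normalised chain lying in it. A surjection is acyclic exactly when its kernel is Moore-acyclic,
and for Moore-acyclic `J ≤ K` the surjection `A/J → A/K` is acyclic. So it suffices to shrink `K`
through Moore-acyclic ideals `K_j` with `m K_j ⊆ K_{j+1}`. If a Moore-acyclic `T` vanishes below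
degree `r`, the elements of `T` whose images in degree `r` all lie in `m T_r` form such a next
ideal, strictly smaller than `T` in degree `r` by Nakayama. Shrinking always at the lowest nonzero
degree, each degree dies after finitely many steps because the levels of `A` are Artinian.
-/

section

open IsLocalRing

lemma map_mem_maximalIdeal_of_isArtinianRing {R S F : Type*} [CommRing R] [IsArtinianRing R]
    [IsLocalRing R] [CommRing S] [IsLocalRing S] [FunLike F R S] [RingHomClass F R S] (f : F)
    {x : R} (hx : x ∈ maximalIdeal R) : f x ∈ maximalIdeal S :=
  (mem_maximalIdeal _).2 ((Ring.KrullDimLE.isNilpotent_iff_mem_maximalIdeal.2 hx).map f).not_isUnit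

namespace ArtAlg

section

variable {Λ : Type} [CommRing Λ] [IsLocalRing Λ] {R S : ArtAlg Λ}

lemma map_maximalIdeal_le (φ : R.carrier →ₐ[Λ] S.carrier) :
    (maximalIdeal R.carrier).map φ ≤ maximalIdeal S.carrier :=
  Ideal.map_le_iff_le_comap.2 fun _ => map_mem_maximalIdeal_of_isArtinianRing φ

lemma cotDenom_le_maximalIdeal (R : ArtAlg Λ) : cotDenom Λ R ≤ maximalIdeal R.carrier :=
  sup_le (Ideal.pow_le_self two_ne_zero) Ideal.mul_le_right

lemma map_cotDenom_le (φ : R.carrier →ₐ[Λ] S.carrier) : (cotDenom Λ R).map φ ≤ cotDenom Λ S := by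
  have hΛ : ((maximalIdeal Λ).map (algebraMap Λ R.carrier)).map φ =
      (maximalIdeal Λ).map (algebraMap Λ S.carrier) := by
    change Ideal.map (φ : R.carrier →+* S.carrier) _ = _
    rw [Ideal.map_map, φ.comp_algebraMap]
  rw [cotDenom, Ideal.map_sup, Ideal.map_pow, Ideal.map_mul, hΛ]
  exact sup_le_sup (Ideal.pow_right_mono (map_maximalIdeal_le φ) 2)
    (Ideal.mul_mono_right (map_maximalIdeal_le φ))

lemma maximalIdeal_mul_lt {I : Ideal R.carrier} (hI : I ≠ ⊥) : maximalIdeal R.carrier * I < I :=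
  Ideal.mul_le_right.lt_of_ne fun h => hI <|
    Submodule.eq_bot_of_le_smul_of_le_jacobson_bot (maximalIdeal R.carrier) I
      (IsNoetherian.noetherian I) h.ge (jacobson_eq_maximalIdeal ⊥ bot_ne_top).ge

variable (R) (I : Ideal R.carrier) (hI : I ≤ maximalIdeal R.carrier)

def quotient : ArtAlg Λ :=
  haveI : Nontrivial (R.carrier ⧸ I) := Ideal.Quotient.nontrivial_iff.2
    (ne_top_of_le_ne_top (maximalIdeal.isMaximal _).ne_top hI)
  haveI := IsLocalRing.of_surjective' (Ideal.Quotient.mk I) Ideal.Quotient.mk_surjective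
  haveI := IsLocalHom.of_surjective (Ideal.Quotient.mk I) Ideal.Quotient.mk_surjective
  haveI : IsLocalHom (algebraMap Λ (R.carrier ⧸ I)) := by
    rw [IsScalarTower.algebraMap_eq Λ R.carrier, Ideal.Quotient.algebraMap_eq]
    infer_instance
  { carrier := R.carrier ⧸ I
    artinian := Ideal.Quotient.mk_surjective.isArtinianRing
    residue_bij := by
      change Function.Bijective
        (ResidueField.map ((Ideal.Quotient.mk I).comp (algebraMap Λ R.carrier)))
      rw [ResidueField.map_comp, RingHom.coe_comp]
      refine Function.Bijective.comp ⟨RingHom.injective _, fun y => ?_⟩ R.residue_bij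
      obtain ⟨x, rfl⟩ := (residue_surjective.comp Ideal.Quotient.mk_surjective) y
      exact ⟨residue R.carrier x, ResidueField.map_residue _ x⟩ }

lemma maximalIdeal_quotient :
    maximalIdeal (R.quotient I hI).carrier = (maximalIdeal R.carrier).map (Ideal.Quotient.mk I) :=
  (map_maximalIdeal_of_surjective (S := (R.quotient I hI).carrier) (Ideal.Quotient.mk I)
    Ideal.Quotient.mk_surjective).symm

lemma mk_mem_maximalIdeal_quotient_iff {x : R.carrier} :
    Ideal.Quotient.mk I x ∈ maximalIdeal (R.quotient I hI).carrier ↔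
      x ∈ maximalIdeal R.carrier := by
  rw [maximalIdeal_quotient]
  exact Ideal.mem_quotient_iff_mem hI

lemma mk_mem_cotDenom_quotient_iff {x : R.carrier} :
    Ideal.Quotient.mk I x ∈ cotDenom Λ (R.quotient I hI) ↔ x ∈ cotDenom Λ R ⊔ I := by
  have hcot : cotDenom Λ (R.quotient I hI) = (cotDenom Λ R).map (Ideal.Quotient.mk I) := by
    rw [cotDenom, cotDenom, Ideal.map_sup, Ideal.map_pow, Ideal.map_mul, maximalIdeal_quotient,
      Ideal.map_map]
    rfl
  rw [hcot]
  exact Ideal.mem_quotient_iff_mem_sup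

end

variable {R S T : ArtAlg Λ}

lemma toAlg_comp (f : R ⟶ S) (g : S ⟶ T) (x : R.carrier) :
    toAlg (f ≫ g) x = toAlg g (toAlg f x) := rfl

lemma isIso_of_bijective (φ : R ⟶ S) (hφ : Function.Bijective (toAlg φ)) : IsIso φ :=
  ⟨(AlgEquiv.ofBijective (toAlg φ) hφ).symm.toAlgHom,
    AlgHom.ext (AlgEquiv.ofBijective (toAlg φ) hφ).symm_apply_apply,
    AlgHom.ext (AlgEquiv.ofBijective (toAlg φ) hφ).apply_symm_apply⟩

end ArtAlg

namespace SArtAlg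

abbrev level (A : SArtAlg Λ) (m : SimplexCategoryᵒᵖ) : Type := (A.X.obj m).carrier

variable {A B : SArtAlg Λ}

lemma hom_ext {f g : A ⟶ B} (h : ∀ m x, app f m x = app g m x) : f = g :=
  NatTrans.ext (funext fun m => AlgHom.ext (h m))

lemma isIso_of_bijective (f : A ⟶ B) (hf : ∀ m, Function.Bijective (app f m)) : IsIso f :=
  haveI : ∀ m, IsIso (NatTrans.app f m) := fun m => ArtAlg.isIso_of_bijective _ (hf m)
  ⟨(NatIso.isIso_of_isIso_app (F := A.X) (G := B.X) f).out⟩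

lemma app_δ (f : A ⟶ B) {n : ℕ} (i : Fin (n + 2)) (x : A.level (op ⦋n + 1⦌)) :
    app f _ (ArtAlg.toAlg (A.X.δ i) x) = ArtAlg.toAlg (B.X.δ i) (app f _ x) :=
  app_naturality f _ x

variable (A) in
/-- Membership in the Moore complex `N_{n+1}(A) = ⋂_{i > 0} ker ∂ᵢ`. -/
def IsNormalized {n : ℕ} (x : A.level (op ⦋n + 1⦌)) : Prop :=
  ∀ i : Fin (n + 1), ArtAlg.toAlg (A.X.δ i.succ) x = 0

section SimplicialIdentities

variable (A)

lemma map_comp_apply {m m' m'' : SimplexCategoryᵒᵖ} (g : m ⟶ m') (g' : m' ⟶ m'')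
    (x : A.level m) :
    ArtAlg.toAlg (A.X.map (g ≫ g')) x =
      ArtAlg.toAlg (A.X.map g') (ArtAlg.toAlg (A.X.map g) x) := by
  rw [A.X.map_comp]; rfl

lemma map_id_apply {m : SimplexCategoryᵒᵖ} (x : A.level m) :
    ArtAlg.toAlg (A.X.map (𝟙 m)) x = x := by
  rw [A.X.map_id]; rfl

lemma δ_δ_apply {n : ℕ} {i j : Fin (n + 2)} (H : i ≤ j) (x : A.level (op ⦋n + 2⦌)) :
    ArtAlg.toAlg (A.X.δ i) (ArtAlg.toAlg (A.X.δ j.succ) x) =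
      ArtAlg.toAlg (A.X.δ j) (ArtAlg.toAlg (A.X.δ i.castSucc) x) := by
  rw [← ArtAlg.toAlg_comp, A.X.δ_comp_δ H]; rfl

lemma δ_δ_zero_apply {n : ℕ} (j : Fin (n + 2)) (x : A.level (op ⦋n + 2⦌)) :
    ArtAlg.toAlg (A.X.δ j) (ArtAlg.toAlg (A.X.δ 0) x) =
      ArtAlg.toAlg (A.X.δ 0) (ArtAlg.toAlg (A.X.δ j.succ) x) :=
  (A.δ_δ_apply (Fin.zero_le j) x).symm

lemma δ_σ_succ_apply {n : ℕ} (i : Fin (n + 1)) (x : A.level (op ⦋n⦌)) :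
    ArtAlg.toAlg (A.X.δ i.succ) (ArtAlg.toAlg (A.X.σ i) x) = x := by
  rw [← ArtAlg.toAlg_comp, A.X.δ_comp_σ_succ]; rfl

lemma δ_σ_of_gt_apply {n : ℕ} {i : Fin (n + 2)} {j : Fin (n + 1)} (H : j.castSucc < i)
    (x : A.level (op ⦋n + 1⦌)) :
    ArtAlg.toAlg (A.X.δ i.succ) (ArtAlg.toAlg (A.X.σ j.castSucc) x) =
      ArtAlg.toAlg (A.X.σ j) (ArtAlg.toAlg (A.X.δ i) x) := by
  rw [← ArtAlg.toAlg_comp, ← ArtAlg.toAlg_comp, A.X.δ_comp_σ_of_gt H]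

lemma δ_succ_sub_σ_δ_eq_zero {n : ℕ} (t : Fin (n + 1)) (x : A.level (op ⦋n + 1⦌))
    (hx : ∀ i : Fin (n + 1), t < i → ArtAlg.toAlg (A.X.δ i.succ) x = 0)
    {i : Fin (n + 1)} (hi : t ≤ i) :
    ArtAlg.toAlg (A.X.δ i.succ)
      (x - ArtAlg.toAlg (A.X.σ t) (ArtAlg.toAlg (A.X.δ t.succ) x)) = 0 := by
  rcases hi.eq_or_lt with rfl | hti
  · rw [map_sub, δ_σ_succ_apply, sub_self]
  obtain ⟨n, rfl⟩ : ∃ k, n = k + 1 := ⟨n - 1, by omega⟩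
  obtain ⟨j, rfl⟩ : ∃ j : Fin (n + 1), j.castSucc = t := ⟨⟨t, by omega⟩, rfl⟩
  have hδδ := A.δ_δ_apply (Fin.castSucc_lt_iff_succ_le.1 hti) x
  rw [← Fin.succ_castSucc] at hδδ
  rw [map_sub, hx i hti, δ_σ_of_gt_apply _ hti, ← hδδ, hx i hti, map_zero, map_zero, sub_zero]

end SimplicialIdentities

@[ext]
structure SimplicialIdeal (A : SArtAlg Λ) where
  ideal : ∀ m, Ideal (A.level m)
  map_mem : ∀ {m m' : SimplexCategoryᵒᵖ} (g : m ⟶ m') {x : A.level m},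
    x ∈ ideal m → ArtAlg.toAlg (A.X.map g) x ∈ ideal m'
  le_maximalIdeal : ∀ m, ideal m ≤ maximalIdeal (A.level m)

def kerIdeal (f : A ⟶ B) : SimplicialIdeal A where
  ideal m := RingHom.ker (app f m).toRingHom
  map_mem {m m'} g {x} hx := by
    have hx : app f m x = 0 := hx
    change app f m' _ = 0
    rw [app_naturality, hx, map_zero]
  le_maximalIdeal _ := le_maximalIdeal (RingHom.ker_ne_top _)

namespace SimplicialIdeal

instance : PartialOrder (SimplicialIdeal A) :=
  PartialOrder.lift ideal fun _ _ => SimplicialIdeal.ext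

variable (J : SimplicialIdeal A)

lemma δ_mem {n : ℕ} (i : Fin (n + 2)) {x : A.level (op ⦋n + 1⦌)} (hx : x ∈ J.ideal _) :
    ArtAlg.toAlg (A.X.δ i) x ∈ J.ideal _ :=
  J.map_mem _ hx

/-- The faces `∂ₜ₊₁` are killed one at a time, from the top down, by subtracting `σₜ ∂ₜ₊₁ x`. -/
lemma exists_normalized_sub_mem {n : ℕ} (x : A.level (op ⦋n + 1⦌))
    (hx : ∀ i : Fin (n + 1), ArtAlg.toAlg (A.X.δ i.succ) x ∈ J.ideal _) :
    ∃ y, x - y ∈ J.ideal _ ∧ A.IsNormalized y := by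
  suffices H : ∀ t ≤ n + 1, ∀ x : A.level (op ⦋n + 1⦌),
      (∀ i : Fin (n + 1), ArtAlg.toAlg (A.X.δ i.succ) x ∈ J.ideal _) →
      (∀ i : Fin (n + 1), t ≤ i.val → ArtAlg.toAlg (A.X.δ i.succ) x = 0) →
      ∃ y, x - y ∈ J.ideal _ ∧ A.IsNormalized y from
    H (n + 1) le_rfl x hx fun i hi => absurd i.isLt (by omega)
  intro t
  induction t with
  | zero => exact fun _ x _ hx => ⟨x, by simp, fun i => hx i i.val.zero_le⟩
  | succ t ih =>
    intro ht x hJ hzero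
    set t' : Fin (n + 1) := ⟨t, ht⟩
    set c := ArtAlg.toAlg (A.X.σ t') (ArtAlg.toAlg (A.X.δ t'.succ) x)
    have hc : c ∈ J.ideal _ := J.map_mem _ (hJ t')
    obtain ⟨y, hxy, hy⟩ := ih (by omega) (x - c)
      (fun i => by rw [map_sub]; exact sub_mem (hJ i) (J.map_mem _ hc))
      (fun i hi => A.δ_succ_sub_σ_δ_eq_zero t' x (fun k hk => hzero k hk) hi)
    exact ⟨y, by convert add_mem hc hxy using 1; abel, hy⟩

def supCotDenom : SimplicialIdeal A where
  ideal m := cotDenom Λ (A.X.obj m) ⊔ J.ideal m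
  map_mem {m m'} g {x} hx := by
    obtain ⟨c, hc, j, hj, rfl⟩ := Submodule.mem_sup.1 hx
    rw [map_add]
    exact Submodule.add_mem_sup (ArtAlg.map_cotDenom_le _ (Ideal.mem_map_of_mem _ hc))
      (J.map_mem g hj)
  le_maximalIdeal m := sup_le (ArtAlg.cotDenom_le_maximalIdeal _) (J.le_maximalIdeal m)

def quotientX : SimplicialObject (ArtAlg Λ) where
  obj m := (A.X.obj m).quotient (J.ideal m) (J.le_maximalIdeal m)
  map g := Ideal.quotientMapₐ (J.ideal _) (ArtAlg.toAlg (A.X.map g)) fun _ => J.map_mem g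
  map_id m := by
    refine AlgHom.ext fun x => ?_
    obtain ⟨x, rfl⟩ := Ideal.Quotient.mk_surjective x
    exact congrArg (Ideal.Quotient.mk _) (A.map_id_apply x)
  map_comp g g' := by
    refine AlgHom.ext fun x => ?_
    obtain ⟨x, rfl⟩ := Ideal.Quotient.mk_surjective x
    exact congrArg (Ideal.Quotient.mk _) (A.map_comp_apply g g' x)

lemma maximalIdeal_quotientX (m : SimplexCategoryᵒᵖ) :
    maximalIdeal (J.quotientX.obj m).carrier =
      (maximalIdeal (A.level m)).map (Ideal.Quotient.mk _) :=
  ArtAlg.maximalIdeal_quotient _ _ (J.le_maximalIdeal m)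

lemma mk_mem_maximalIdeal_iff {m : SimplexCategoryᵒᵖ} {x : A.level m} :
    Ideal.Quotient.mk (J.ideal m) x ∈ maximalIdeal (J.quotientX.obj m).carrier ↔
      x ∈ maximalIdeal (A.level m) :=
  ArtAlg.mk_mem_maximalIdeal_quotient_iff _ _ (J.le_maximalIdeal m)

lemma mk_mem_cotDenom_iff {m : SimplexCategoryᵒᵖ} {x : A.level m} :
    Ideal.Quotient.mk (J.ideal m) x ∈ cotDenom Λ (J.quotientX.obj m) ↔
      x ∈ J.supCotDenom.ideal m :=
  ArtAlg.mk_mem_cotDenom_quotient_iff _ _ (J.le_maximalIdeal m)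

lemma normCotVanish_quotientX {n : ℕ} (h : NormCotVanish Λ A.X n) :
    NormCotVanish Λ J.quotientX n := by
  cases n with
  | zero =>
    intro x hx
    obtain ⟨x, rfl⟩ := Ideal.Quotient.mk_surjective x
    exact J.mk_mem_cotDenom_iff.2 (Ideal.mem_sup_left (h x (J.mk_mem_maximalIdeal_iff.1 hx)))
  | succ n =>
    intro x hx hfaces
    obtain ⟨x, rfl⟩ := Ideal.Quotient.mk_surjective x
    obtain ⟨y, hxy, hy⟩ := J.supCotDenom.exists_normalized_sub_mem x
      fun i => J.mk_mem_cotDenom_iff.1 (hfaces i)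
    have hymax : y ∈ maximalIdeal _ := by
      simpa using sub_mem (J.mk_mem_maximalIdeal_iff.1 hx) (J.supCotDenom.le_maximalIdeal _ hxy)
    have hycot : y ∈ cotDenom Λ _ := h y hymax fun i => by rw [hy i]; exact zero_mem _
    have hx : y + (x - y) ∈ J.supCotDenom.ideal _ := add_mem (Ideal.mem_sup_left hycot) hxy
    exact J.mk_mem_cotDenom_iff.2 (by rwa [add_sub_cancel] at hx)

def quotient : SArtAlg Λ where
  X := J.quotientX
  nilpotent := by
    obtain ⟨n, hn, hA⟩ := A.nilpotent
    refine ⟨n, hn, fun m => ?_⟩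
    change maximalIdeal (J.quotientX.obj m).carrier ^ n = ⊥
    rw [maximalIdeal_quotientX]
    exact (Ideal.map_pow _ _ _).symm.trans (by rw [hA m, Ideal.map_bot]; rfl)
  cotFinite :=
    let ⟨N, hN⟩ := A.cotFinite
    ⟨N, fun n hn => J.normCotVanish_quotientX (hN n hn)⟩

def toQuotient : A ⟶ J.quotient where
  app m := Ideal.Quotient.mkₐ Λ (J.ideal m)

lemma kerIdeal_toQuotient : kerIdeal J.toQuotient = J :=
  SimplicialIdeal.ext (funext fun _ => Ideal.mk_ker)

def lift (f : A ⟶ B) (h : J ≤ kerIdeal f) : J.quotient ⟶ B where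
  app m := Ideal.Quotient.liftₐ (J.ideal m) (app f m) (h m)
  naturality _ _ g := by
    refine AlgHom.ext fun x => ?_
    obtain ⟨x, rfl⟩ := Ideal.Quotient.mk_surjective x
    exact app_naturality f g x

lemma toQuotient_comp_lift (f : A ⟶ B) (h : J ≤ kerIdeal f) : J.toQuotient ≫ J.lift f h = f :=
  hom_ext fun _ _ => rfl

lemma isIso_lift (f : A ⟶ B) (hf : Surj f) (h : J = kerIdeal f) : IsIso (J.lift f h.le) := by
  refine isIso_of_bijective _ fun m => ⟨fun x y hxy => ?_, fun y => ?_⟩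
  · obtain ⟨x, rfl⟩ := Ideal.Quotient.mk_surjective x
    obtain ⟨y, rfl⟩ := Ideal.Quotient.mk_surjective y
    refine Ideal.Quotient.eq.2 (h.ge m ?_)
    change app f m (x - y) = 0
    rw [map_sub, sub_eq_zero]
    exact hxy
  · obtain ⟨x, rfl⟩ := hf m y
    exact ⟨Ideal.Quotient.mk _ x, rfl⟩

def maximalIdealPowMul (j : ℕ) : SimplicialIdeal A where
  ideal m := maximalIdeal (A.level m) ^ j * J.ideal m
  map_mem {m m'} g {x} hx := by
    have hle : (maximalIdeal (A.level m) ^ j * J.ideal m).map (ArtAlg.toAlg (A.X.map g)) ≤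
        maximalIdeal (A.level m') ^ j * J.ideal m' := by
      rw [Ideal.map_mul, Ideal.map_pow]
      exact Ideal.mul_mono (Ideal.pow_right_mono (ArtAlg.map_maximalIdeal_le _) j)
        (Ideal.map_le_iff_le_comap.2 fun _ => J.map_mem g)
    exact hle (Ideal.mem_map_of_mem _ hx)
  le_maximalIdeal m := Ideal.mul_le_right.trans (J.le_maximalIdeal m)

variable {J} {K : SimplicialIdeal A}

def factor (h : J ≤ K) : J.quotient ⟶ K.quotient :=
  J.lift K.toQuotient (h.trans K.kerIdeal_toQuotient.ge)

lemma toQuotient_comp_factor (h : J ≤ K) : J.toQuotient ≫ factor h = K.toQuotient :=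
  J.toQuotient_comp_lift _ _

lemma factor_surj (h : J ≤ K) : Surj (factor h) := fun _ y => by
  obtain ⟨x, rfl⟩ := Ideal.Quotient.mk_surjective y
  exact ⟨Ideal.Quotient.mk _ x, rfl⟩

lemma mk_mem_kerIdeal_factor_iff (h : J ≤ K) {m : SimplexCategoryᵒᵖ} {x : A.level m} :
    Ideal.Quotient.mk _ x ∈ (kerIdeal (factor h)).ideal m ↔ x ∈ K.ideal m :=
  Ideal.Quotient.eq_zero_iff_mem

lemma factor_injective_of_eq_bot (h : J ≤ K) {m : SimplexCategoryᵒᵖ} (hK : K.ideal m = ⊥) :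
    Function.Injective (app (factor h) m) := by
  intro x y hxy
  obtain ⟨x, rfl⟩ := Ideal.Quotient.mk_surjective x
  obtain ⟨y, rfl⟩ := Ideal.Quotient.mk_surjective y
  have hxy : x - y ∈ K.ideal m := Ideal.Quotient.eq.1 hxy
  rw [hK, Submodule.mem_bot, sub_eq_zero] at hxy
  rw [hxy]

lemma smallExt_factor (h : J ≤ K) (hK : ∀ m, maximalIdeal (A.level m) * K.ideal m ≤ J.ideal m) :
    SmallExt (factor h) := by
  refine ⟨factor_surj h, fun m => eq_bot_iff.2 (Ideal.mul_le.2 fun a ha b hb => ?_)⟩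
  obtain ⟨a, rfl⟩ := Ideal.Quotient.mk_surjective a
  obtain ⟨b, rfl⟩ := Ideal.Quotient.mk_surjective b
  replace ha := J.mk_mem_maximalIdeal_iff.1 ha
  exact (Submodule.mem_bot _).2 (Ideal.Quotient.eq_zero_iff_mem.2
    (hK m (Ideal.mul_mem_mul ha ((mk_mem_kerIdeal_factor_iff h).1 hb))))

end SimplicialIdeal

open SimplicialIdeal

structure KernelFiltration (f : A ⟶ B) where
  K : ℕ → SimplicialIdeal A
  K_zero : K 0 = kerIdeal f
  succ_le : ∀ j, K (j + 1) ≤ K j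
  maximalIdeal_mul_le : ∀ j m, maximalIdeal (A.level m) * (K j).ideal m ≤ (K (j + 1)).ideal m
  exists_eq_bot : ∀ m, ∃ j, (K j).ideal m = ⊥

namespace KernelFiltration

variable {f : A ⟶ B} (F : KernelFiltration f)

lemma exists_forall_ge_eq_bot (m : SimplexCategoryᵒᵖ) : ∃ j₀, ∀ j ≥ j₀, (F.K j).ideal m = ⊥ :=
  let ⟨j₀, hj₀⟩ := F.exists_eq_bot m
  ⟨j₀, fun _ hj => eq_bot_iff.2 (hj₀ ▸ antitone_nat_of_succ_le F.succ_le hj m)⟩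

lemma eq_of_forall_mk_eq {m : SimplexCategoryᵒᵖ} {a a' : A.level m}
    (h : ∀ j, Ideal.Quotient.mk ((F.K j).ideal m) a = Ideal.Quotient.mk _ a') : a = a' := by
  obtain ⟨j, hj⟩ := F.exists_eq_bot m
  have h := Ideal.Quotient.eq.1 (h j)
  rwa [hj, Submodule.mem_bot, sub_eq_zero] at h

lemma exists_forall_mk_eq {m : SimplexCategoryᵒᵖ} (s : ∀ j, (F.K j).quotient.level m)
    (hs : ∀ j, app (factor (F.succ_le j)) m (s (j + 1)) = s j) :
    ∃ a, ∀ j, Ideal.Quotient.mk ((F.K j).ideal m) a = s j := by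
  obtain ⟨j₀, hj₀⟩ := F.exists_forall_ge_eq_bot m
  obtain ⟨a, ha⟩ := Ideal.Quotient.mk_surjective (s j₀)
  refine ⟨a, fun j => (le_total j j₀).elim (fun hj => ?_) (fun hj => ?_)⟩
  · refine Nat.decreasingInduction (fun k _ ih => ?_) ha hj
    rw [← hs k, ← ih]
    rfl
  · refine Nat.le_induction ha (fun k hk ih => ?_) j hj
    refine factor_injective_of_eq_bot (F.succ_le k) (hj₀ k hk) ?_
    rw [hs k, ← ih]
    rfl

noncomputable def tower (hf : Surj f) : TowerFactorisation f where
  C j := (F.K j).quotient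
  g j := factor (F.succ_le j)
  p j := (F.K j).toQuotient
  e := haveI := (F.K 0).isIso_lift f hf F.K_zero
    asIso ((F.K 0).lift f F.K_zero.le)
  compat _ := toQuotient_comp_factor _
  factors := toQuotient_comp_lift _ _ _
  isLimit _ :=
    ⟨fun _ _ h => F.eq_of_forall_mk_eq fun j => congrFun (congrArg Subtype.val h) j,
      fun ⟨s, hs⟩ =>
        let ⟨a, ha⟩ := F.exists_forall_mk_eq s hs
        ⟨a, Subtype.ext (funext ha)⟩⟩

lemma smallExt_tower (hf : Surj f) (j : ℕ) : SmallExt ((F.tower hf).g j) :=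
  smallExt_factor (F.succ_le j) (F.maximalIdeal_mul_le j)

def maximalIdealPow (f : A ⟶ B) : KernelFiltration f where
  K := (kerIdeal f).maximalIdealPowMul
  K_zero := SimplicialIdeal.ext (funext fun _ => by
    simp only [maximalIdealPowMul, pow_zero, Ideal.one_eq_top, Ideal.top_mul])
  succ_le j _ := by
    change _ ^ (j + 1) * _ ≤ _ ^ j * _
    rw [pow_succ, mul_assoc]
    exact Ideal.mul_mono_right Ideal.mul_le_right
  maximalIdeal_mul_le j _ := by
    change _ * (_ ^ j * _) ≤ _ ^ (j + 1) * _
    rw [← mul_assoc, ← pow_succ']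
  exists_eq_bot m :=
    let ⟨n, _, hn⟩ := A.nilpotent
    ⟨n, by change _ ^ n * _ = ⊥; rw [hn m, Ideal.bot_mul]⟩

end KernelFiltration

lemma mooreRel_equivalence (A : SArtAlg Λ) (i : ℕ) : Equivalence (A.mooreRel i) where
  refl _ := ⟨0, fun _ => map_zero _, by rw [map_zero, sub_self]⟩
  symm := fun ⟨h, h1, h2⟩ =>
    ⟨-h, fun j => by rw [map_neg, h1 j, neg_zero], by rw [map_neg, h2, neg_sub]⟩
  trans := fun ⟨h, h1, h2⟩ ⟨h', h1', h2'⟩ =>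
    ⟨h + h', fun j => by rw [map_add, h1 j, h1' j, add_zero],
      by rw [map_add, h2, h2', sub_add_sub_cancel]⟩

lemma pi_mk_eq_iff {i : ℕ} {x y : {z : A.level (op ⦋i⦌) // A.isCycle i z}} :
    Quot.mk (A.mooreRel i) x = Quot.mk _ y ↔ A.mooreRel i x y :=
  Quot.eq.trans (A.mooreRel_equivalence i).eqvGen_iff

lemma isCycle_zero (A : SArtAlg Λ) (n : ℕ) : A.isCycle n 0 := by
  cases n with
  | zero => trivial
  | succ n => exact fun _ => map_zero _

lemma isCycle_δ_zero {n : ℕ} {x : A.level (op ⦋n + 1⦌)} (hx : A.IsNormalized x) :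
    A.isCycle n (ArtAlg.toAlg (A.X.δ 0) x) := by
  cases n with
  | zero => trivial
  | succ n => exact fun j => by rw [δ_δ_zero_apply, hx j, map_zero]

lemma isCycle_app (f : A ⟶ B) {i : ℕ} {x : A.level (op ⦋i⦌)} (hx : A.isCycle i x) :
    B.isCycle i (app f _ x) := by
  cases i with
  | zero => trivial
  | succ i => exact fun j => by rw [← app_δ, hx j, map_zero]

lemma piMap_mk (f : A ⟶ B) {i : ℕ} (x : {z : A.level (op ⦋i⦌) // A.isCycle i z}) :
    piMap f i (Quot.mk _ x) = Quot.mk _ ⟨app f _ x.1, isCycle_app f x.2⟩ := rfl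

lemma exists_normalized_preimage {f : A ⟶ B} (hf : Surj f) {n : ℕ} {b : B.level (op ⦋n + 1⦌)}
    (hb : B.IsNormalized b) : ∃ a, app f _ a = b ∧ A.IsNormalized a := by
  obtain ⟨a, rfl⟩ := hf _ b
  obtain ⟨y, hay, hy⟩ := (kerIdeal f).exists_normalized_sub_mem a fun i => by
    change app f _ _ = 0
    rw [app_δ, hb i]
  refine ⟨y, ?_, hy⟩
  have hay : app f _ (a - y) = 0 := hay
  rwa [map_sub, sub_eq_zero, eq_comm] at hay

def SimplicialIdeal.MooreAcyclic (T : SimplicialIdeal A) : Prop :=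
  ∀ (n : ℕ) (x : A.level (op ⦋n⦌)), x ∈ T.ideal _ → A.isCycle n x →
    ∃ h ∈ T.ideal (op ⦋n + 1⦌), A.IsNormalized h ∧ ArtAlg.toAlg (A.X.δ 0) h = x

section Acyclic

variable {f : A ⟶ B}

lemma piMap_injective_of_mooreAcyclic_kerIdeal (hf : Surj f) (hK : (kerIdeal f).MooreAcyclic)
    (i : ℕ) : Function.Injective (piMap f i) := by
  rintro ⟨x⟩ ⟨y⟩ hxy
  obtain ⟨b, hb, hbxy⟩ := pi_mk_eq_iff.1 hxy
  obtain ⟨a, rfl, ha⟩ := exists_normalized_preimage hf hb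
  set w := x.1 - y.1 - ArtAlg.toAlg (A.X.δ 0) a
  have hwK : w ∈ (kerIdeal f).ideal _ := by
    change app f _ w = 0
    rw [map_sub, map_sub, app_δ, hbxy, sub_self]
  have hw : A.isCycle i w := by
    cases i with
    | zero => trivial
    | succ i =>
      intro j
      rw [map_sub, map_sub, x.2 j, y.2 j, δ_δ_zero_apply, ha j, map_zero, sub_zero, sub_zero]
  obtain ⟨z, -, hz, hzw⟩ := hK i w hwK hw
  refine pi_mk_eq_iff.2 ⟨a + z, fun j => by rw [map_add, ha j, hz j, add_zero], ?_⟩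
  rw [map_add, hzw, add_sub_cancel]

lemma piMap_surjective_of_mooreAcyclic_kerIdeal (hf : Surj f) (hK : (kerIdeal f).MooreAcyclic)
    (i : ℕ) : Function.Surjective (piMap f i) := by
  rintro ⟨b⟩
  cases i with
  | zero =>
    obtain ⟨a, ha⟩ := hf _ b.1
    exact ⟨Quot.mk _ ⟨a, trivial⟩, congrArg _ (Subtype.ext ha)⟩
  | succ i =>
    obtain ⟨a, hab, ha⟩ := exists_normalized_preimage hf fun j => b.2 j.succ
    have hκK : ArtAlg.toAlg (A.X.δ 0) a ∈ (kerIdeal f).ideal _ := by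
      change app f _ _ = 0
      rw [app_δ, hab]
      exact b.2 0
    obtain ⟨z, hzK, hz, hzκ⟩ := hK i _ hκK (isCycle_δ_zero ha)
    have hcyc : A.isCycle (i + 1) (a - z) := fun j => by
      refine Fin.cases ?_ (fun k => ?_) j
      · rw [map_sub, hzκ, sub_self]
      · rw [map_sub, ha k, hz k, sub_zero]
    refine ⟨Quot.mk _ ⟨a - z, hcyc⟩, congrArg _ (Subtype.ext ?_)⟩
    have hzK : app f _ z = 0 := hzK
    change app f _ (a - z) = b.1
    rw [map_sub, hab, hzK, sub_zero]

lemma acyclic_of_mooreAcyclic_kerIdeal (hf : Surj f) (hK : (kerIdeal f).MooreAcyclic) :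
    Acyclic f := fun i =>
  ⟨piMap_injective_of_mooreAcyclic_kerIdeal hf hK i,
    piMap_surjective_of_mooreAcyclic_kerIdeal hf hK i⟩

lemma exists_normalized_δ_zero_eq_of_injective {n : ℕ} (hinj : Function.Injective (piMap f n))
    {x : A.level (op ⦋n⦌)} (hxK : x ∈ (kerIdeal f).ideal _) (hx : A.isCycle n x) :
    ∃ h, A.IsNormalized h ∧ ArtAlg.toAlg (A.X.δ 0) h = x := by
  have hx0 : piMap f n (Quot.mk _ ⟨x, hx⟩) = piMap f n (Quot.mk _ ⟨0, A.isCycle_zero n⟩) := by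
    rw [piMap_mk, piMap_mk]
    exact congrArg _ (Subtype.ext (hxK.trans (map_zero _).symm))
  obtain ⟨h, hh, hδ⟩ := pi_mk_eq_iff.1 (hinj hx0)
  exact ⟨h, hh, hδ.trans (sub_zero x)⟩

lemma exists_mem_kerIdeal_normalized_δ_zero_eq_of_surjective (hf : Surj f) {n : ℕ}
    (hsurj : Function.Surjective (piMap f (n + 1))) {h : A.level (op ⦋n + 1⦌)}
    (hh : A.IsNormalized h) (hδ : ArtAlg.toAlg (A.X.δ 0) h ∈ (kerIdeal f).ideal _) :
    ∃ h' ∈ (kerIdeal f).ideal _, A.IsNormalized h' ∧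
      ArtAlg.toAlg (A.X.δ 0) h' = ArtAlg.toAlg (A.X.δ 0) h := by
  have hδ : app f _ (ArtAlg.toAlg (A.X.δ 0) h) = 0 := hδ
  have hb : B.isCycle (n + 1) (app f _ h) := fun j => by
    refine Fin.cases ?_ (fun k => ?_) j
    · rw [← app_δ, hδ]
    · rw [← app_δ, hh k, map_zero]
  obtain ⟨⟨c⟩, hc⟩ := hsurj (Quot.mk _ ⟨_, hb⟩)
  obtain ⟨d, hd, hdc⟩ := pi_mk_eq_iff.1 hc
  obtain ⟨d, rfl, hd'⟩ := exists_normalized_preimage hf hd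
  refine ⟨h - c.1 + ArtAlg.toAlg (A.X.δ 0) d, ?_, fun j => ?_, ?_⟩
  · change app f _ (h - c.1 + _) = 0
    rw [map_add, map_sub, app_δ, hdc, sub_add_sub_cancel, sub_self]
  · rw [map_add, map_sub, hh j, c.2 j.succ, δ_δ_zero_apply, hd' j.succ, map_zero, sub_zero,
      add_zero]
  · rw [map_add, map_sub, c.2 0, δ_δ_zero_apply, hd' 0, map_zero, sub_zero, add_zero]

lemma mooreAcyclic_kerIdeal_of_acyclic (hf : Surj f) (ha : Acyclic f) :
    (kerIdeal f).MooreAcyclic := by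
  intro n x hxK hx
  obtain ⟨h, hh, rfl⟩ := exists_normalized_δ_zero_eq_of_injective (ha n).1 hxK hx
  exact exists_mem_kerIdeal_normalized_δ_zero_eq_of_surjective hf (ha (n + 1)).2 hh hxK

end Acyclic

namespace SimplicialIdeal

section Factor

variable {J K : SimplicialIdeal A}

lemma exists_isCycle_sub_mem (hJK : J ≤ K) (hJ : J.MooreAcyclic) {n : ℕ}
    {x : A.level (op ⦋n⦌)} (hxK : x ∈ K.ideal _)
    (hx : J.quotient.isCycle n (Ideal.Quotient.mk _ x)) :
    ∃ z ∈ K.ideal _, A.isCycle n z ∧ x - z ∈ J.ideal _ := by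
  cases n with
  | zero => exact ⟨x, hxK, trivial, by simp⟩
  | succ n =>
    have hfaces (i : Fin (n + 2)) : ArtAlg.toAlg (A.X.δ i) x ∈ J.ideal _ :=
      Ideal.Quotient.eq_zero_iff_mem.1 (hx i)
    obtain ⟨y, hxy, hy⟩ := J.exists_normalized_sub_mem x fun i => hfaces i.succ
    have hyK : y ∈ K.ideal _ := by simpa using sub_mem hxK (hJK _ hxy)
    have hy0 : ArtAlg.toAlg (A.X.δ 0) y ∈ J.ideal _ := by
      have h := sub_mem (hfaces 0) (J.δ_mem 0 hxy)
      rwa [map_sub, sub_sub_cancel] at h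
    obtain ⟨w, hwJ, hw, hwy⟩ := hJ n _ hy0 (isCycle_δ_zero hy)
    have hxyw : x - (y - w) ∈ J.ideal _ := by
      rw [sub_sub_eq_add_sub, add_sub_right_comm]
      exact add_mem hxy hwJ
    refine ⟨y - w, sub_mem hyK (hJK _ hwJ), fun i => ?_, hxyw⟩
    refine Fin.cases ?_ (fun k => ?_) i
    · rw [map_sub, hwy, sub_self]
    · rw [map_sub, hy k, hw k, sub_zero]

lemma mooreAcyclic_kerIdeal_factor (hJK : J ≤ K) (hJ : J.MooreAcyclic) (hK : K.MooreAcyclic) :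
    (kerIdeal (factor hJK)).MooreAcyclic := by
  intro n x hxK hx
  obtain ⟨x, rfl⟩ := Ideal.Quotient.mk_surjective x
  obtain ⟨z, hzK, hz, hxz⟩ :=
    exists_isCycle_sub_mem hJK hJ ((mk_mem_kerIdeal_factor_iff hJK).1 hxK) hx
  obtain ⟨h, hhK, hh, hhz⟩ := hK n z hzK hz
  refine ⟨Ideal.Quotient.mk _ h, (mk_mem_kerIdeal_factor_iff hJK).2 hhK, fun i => ?_, ?_⟩
  · change Ideal.Quotient.mk _ (ArtAlg.toAlg (A.X.δ i.succ) h) = 0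
    rw [hh i, map_zero]
  · exact (congrArg (Ideal.Quotient.mk _) hhz).trans
      (Ideal.Quotient.eq.2 (by simpa using neg_mem hxz))

lemma acyclic_factor (hJK : J ≤ K) (hJ : J.MooreAcyclic) (hK : K.MooreAcyclic) :
    Acyclic (factor hJK) :=
  acyclic_of_mooreAcyclic_kerIdeal (factor_surj hJK) (mooreAcyclic_kerIdeal_factor hJK hJ hK)

end Factor

variable (T : SimplicialIdeal A)

def shrinkAt (r : ℕ) : SimplicialIdeal A where
  ideal m := T.ideal m ⊓ ⨅ γ : ⦋r⦌ ⟶ m.unop,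
    (maximalIdeal (A.level (op ⦋r⦌)) * T.ideal (op ⦋r⦌)).comap (ArtAlg.toAlg (A.X.map γ.op))
  map_mem {m m'} g {x} hx := by
    simp only [Ideal.mem_inf, Submodule.mem_iInf, Ideal.mem_comap] at hx ⊢
    refine ⟨T.map_mem g hx.1, fun γ => ?_⟩
    rw [← map_comp_apply]
    exact hx.2 (γ ≫ g.unop)
  le_maximalIdeal m := inf_le_left.trans (T.le_maximalIdeal m)

noncomputable def bottomDegree : ℕ := sInf {n | T.ideal (op ⦋n⦌) ≠ ⊥}

noncomputable def shrinkAtBottom : SimplicialIdeal A := T.shrinkAt T.bottomDegree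

variable {T}

lemma mem_shrinkAt {r : ℕ} {m : SimplexCategoryᵒᵖ} {x : A.level m} :
    x ∈ (T.shrinkAt r).ideal m ↔ x ∈ T.ideal m ∧ ∀ γ : ⦋r⦌ ⟶ m.unop,
      ArtAlg.toAlg (A.X.map γ.op) x ∈ maximalIdeal (A.level (op ⦋r⦌)) * T.ideal (op ⦋r⦌) := by
  simp only [shrinkAt, Ideal.mem_inf, Submodule.mem_iInf, Ideal.mem_comap]

lemma shrinkAt_le (r : ℕ) : T.shrinkAt r ≤ T := fun _ _ hx => (mem_shrinkAt.1 hx).1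

lemma maximalIdeal_mul_le_shrinkAt (r : ℕ) (m : SimplexCategoryᵒᵖ) :
    maximalIdeal (A.level m) * T.ideal m ≤ (T.shrinkAt r).ideal m := by
  refine Ideal.mul_le.2 fun a ha t ht => mem_shrinkAt.2 ⟨Ideal.mul_mem_left _ a ht, fun γ => ?_⟩
  rw [map_mul]
  exact Ideal.mul_mem_mul (map_mem_maximalIdeal_of_isArtinianRing _ ha) (T.map_mem γ.op ht)

lemma shrinkAt_ideal_le (r : ℕ) :
    (T.shrinkAt r).ideal (op ⦋r⦌) ≤ maximalIdeal (A.level (op ⦋r⦌)) * T.ideal (op ⦋r⦌) :=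
  fun x hx => A.map_id_apply x ▸ (mem_shrinkAt.1 hx).2 (𝟙 _)

/-- A map `⦋r⦌ ⟶ ⦋q + 1⦌` with `r ≤ q` factors through a face, so a normalised `w` with
`∂₀ w = η` meets degree `r` only through `η`. -/
lemma mooreAcyclic_shrinkAt {r : ℕ} (hlow : ∀ i < r, T.ideal (op ⦋i⦌) = ⊥)
    (hT : T.MooreAcyclic) : (T.shrinkAt r).MooreAcyclic := by
  intro q η hη hcyc
  obtain ⟨hηT, hηγ⟩ := mem_shrinkAt.1 hη
  rcases lt_or_ge q r with hqr | hrq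
  · obtain rfl : η = 0 := by simpa [hlow q hqr] using hηT
    exact ⟨0, zero_mem _, fun _ => map_zero _, map_zero _⟩
  obtain ⟨w, hwT, hw, hwη⟩ := hT q η hηT hcyc
  refine ⟨w, mem_shrinkAt.2 ⟨hwT, fun γ => ?_⟩, hw, hwη⟩
  have hγ : ¬Function.Surjective γ.toOrderHom := fun hs =>
    haveI := SimplexCategory.epi_iff_surjective.2 hs
    absurd (SimplexCategory.len_le_of_epi γ) (by simp; omega)
  obtain ⟨i, θ, rfl⟩ := SimplexCategory.eq_comp_δ_of_not_surjective γ hγ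
  change ArtAlg.toAlg (A.X.map ((SimplexCategory.δ i).op ≫ θ.op)) w ∈ _
  rw [map_comp_apply]
  refine Fin.cases ?_ (fun k => ?_) i
  · exact hwη ▸ hηγ θ
  · rw [show ArtAlg.toAlg (A.X.map (SimplexCategory.δ k.succ).op) w = 0 from hw k, map_zero]
    exact zero_mem _

lemma ideal_eq_bot_of_lt_bottomDegree {i : ℕ} (hi : i < T.bottomDegree) :
    T.ideal (op ⦋i⦌) = ⊥ :=
  not_not.1 (Nat.notMem_of_lt_sInf hi)

lemma bottomDegree_eq {n : ℕ} (hn : T.ideal (op ⦋n⦌) ≠ ⊥)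
    (hlow : ∀ i < n, T.ideal (op ⦋i⦌) = ⊥) : T.bottomDegree = n :=
  le_antisymm (Nat.sInf_le hn) (le_csInf ⟨n, hn⟩ fun _ hi => not_lt.1 fun h => hi (hlow _ h))

lemma mooreAcyclic_shrinkAtBottom (hT : T.MooreAcyclic) : T.shrinkAtBottom.MooreAcyclic :=
  mooreAcyclic_shrinkAt (fun _ => ideal_eq_bot_of_lt_bottomDegree) hT

lemma shrinkAtBottom_ideal_lt {n : ℕ} (hn : T.ideal (op ⦋n⦌) ≠ ⊥)
    (hlow : ∀ i < n, T.ideal (op ⦋i⦌) = ⊥) :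
    T.shrinkAtBottom.ideal (op ⦋n⦌) < T.ideal (op ⦋n⦌) := by
  rw [shrinkAtBottom, bottomDegree_eq hn hlow]
  exact (shrinkAt_ideal_le n).trans_lt (ArtAlg.maximalIdeal_mul_lt hn)

lemma antitone_iterate_shrinkAtBottom (T : SimplicialIdeal A) :
    Antitone fun j => shrinkAtBottom^[j] T :=
  antitone_nat_of_succ_le fun j => by
    rw [Function.iterate_succ_apply']
    exact shrinkAt_le _

/-- In degree `n` the descending chain of ideals stabilises since `A` is Artinian, and by
Nakayama it can only stabilise at `0` once the lower degrees have died. -/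
lemma exists_iterate_shrinkAtBottom_eq_bot (T : SimplicialIdeal A) (n : ℕ) :
    ∃ j, ∀ i < n, (shrinkAtBottom^[j] T).ideal (op ⦋i⦌) = ⊥ := by
  induction n with
  | zero => exact ⟨0, fun i hi => absurd hi i.not_lt_zero⟩
  | succ n ih =>
    obtain ⟨j₀, hj₀⟩ := ih
    have hanti := antitone_iterate_shrinkAtBottom T
    obtain ⟨k, hk⟩ := WellFoundedLT.antitone_chain_condition (f := fun k =>
      (shrinkAtBottom^[j₀ + k] T).ideal (op ⦋n⦌)) fun _ _ h => hanti (by omega) _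
    have hlow (i : ℕ) (hi : i < n) : (shrinkAtBottom^[j₀ + k] T).ideal (op ⦋i⦌) = ⊥ :=
      eq_bot_iff.2 (hj₀ i hi ▸ hanti (Nat.le_add_right j₀ k) _)
    have hn : (shrinkAtBottom^[j₀ + k] T).ideal (op ⦋n⦌) = ⊥ := by
      by_contra hne
      have hstable := hk (k + 1) (by omega)
      rw [← add_assoc, Function.iterate_succ_apply'] at hstable
      exact (shrinkAtBottom_ideal_lt hne hlow).ne hstable.symm
    refine ⟨j₀ + k, fun i hi => ?_⟩
    rcases Nat.lt_succ_iff_lt_or_eq.1 hi with hi | rfl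
    · exact hlow i hi
    · exact hn

end SimplicialIdeal

namespace KernelFiltration

noncomputable def iterateShrinkAtBottom (f : A ⟶ B) : KernelFiltration f where
  K j := shrinkAtBottom^[j] (kerIdeal f)
  K_zero := rfl
  succ_le j := by
    rw [Function.iterate_succ_apply']
    exact shrinkAt_le _
  maximalIdeal_mul_le j m := by
    rw [Function.iterate_succ_apply']
    exact maximalIdeal_mul_le_shrinkAt _ m
  exists_eq_bot m := by
    obtain ⟨j, hj⟩ := exists_iterate_shrinkAtBottom_eq_bot (kerIdeal f) (m.unop.len + 1)
    exact ⟨j, hj _ (Nat.lt_succ_self _)⟩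

lemma mooreAcyclic_iterateShrinkAtBottom {f : A ⟶ B} (hf : Surj f) (ha : Acyclic f) (j : ℕ) :
    ((iterateShrinkAtBottom f).K j).MooreAcyclic := by
  induction j with
  | zero => exact mooreAcyclic_kerIdeal_of_acyclic hf ha
  | succ j ih =>
    change (shrinkAtBottom^[j + 1] _).MooreAcyclic
    rw [Function.iterate_succ_apply']
    exact mooreAcyclic_shrinkAtBottom ih

lemma acySmallExt_tower {f : A ⟶ B} (F : KernelFiltration f) (hf : Surj f)
    (hK : ∀ j, (F.K j).MooreAcyclic) (j : ℕ) : AcySmallExt ((F.tower hf).g j) :=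
  ⟨F.smallExt_tower hf j, acyclic_factor (F.succ_le j) (hK (j + 1)) (hK j)⟩

end KernelFiltration

end SArtAlg

end

/-- Lemma 1.8: every surjection in `sC_Λ` is a (possibly
transfinite inverse limit of a) composition of small extensions, and every
acyclic surjection is a composition of acyclic small extensions. -/
theorem surjection_factors_into_small_extensions :
    (∀ {A B : SArtAlg Λ} (f : A ⟶ B), SArtAlg.Surj f →
      ∃ T : TowerFactorisation f, ∀ j, SArtAlg.SmallExt (T.g j)) ∧
    (∀ {A B : SArtAlg Λ} (f : A ⟶ B), SArtAlg.Surj f → SArtAlg.Acyclic f →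
      ∃ T : TowerFactorisation f, ∀ j, SArtAlg.AcySmallExt (T.g j)) :=
  ⟨fun f hf => ⟨_, (SArtAlg.KernelFiltration.maximalIdealPow f).smallExt_tower hf⟩,
    fun f hf ha => ⟨_, (SArtAlg.KernelFiltration.iterateShrinkAtBottom f).acySmallExt_tower hf
      (SArtAlg.KernelFiltration.mooreAcyclic_iterateShrinkAtBottom hf ha)⟩⟩

end Statement1
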